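/- arXiv:1703.02078 — 2 statements merged into one kernel-verified Lean document; each statement's English description precedes it below -/
import Mathlib

section
/- Let (Ω, F, P) be a probability space, let G₁ and G₂ be sub-σ-algebras of F, let E₁, E₂ ∈ F be events, and let α ∈ [0,1]. Suppose the conditional probability of E₂ given G₁ is at most α/2 almost everywhere (i.e., the conditional expectation E[1_{E₂} | G₁] ≤ α/2 a.e.) and likewise the conditional expectation E[1_{E₁} | G₂] ≤ α/2 a.e. Then P(E₁ ∪ E₂) ≤ α. (This is Proposition 1 of the paper: cross-screening strongly controls the family-wise error rate, where E₁ and E₂ are the events that at least one true null hypothesis is rejected using the first and second half-sample respectively, G₁ is the σ-algebra generated by the first half-sample and G₂ by the second half-sample.) -/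
open MeasureTheory ProbabilityTheory

section

variable {Ω : Type*} {m m₀ : MeasurableSpace Ω} {μ : Measure Ω} {s : Set Ω} {c : ℝ}

theorem measureReal_le_of_condExp_indicator_le [IsFiniteMeasure μ] (hm : m ≤ m₀)
    (hs : MeasurableSet[m₀] s) (h : μ[s.indicator (fun _ => (1 : ℝ)) | m] ≤ᵐ[μ] fun _ => c) :
    μ.real s ≤ μ.real Set.univ * c :=
  calc μ.real s = ∫ ω, s.indicator (fun _ => (1 : ℝ)) ω ∂μ :=
        (integral_indicator_one hs).symm
    _ = ∫ ω, μ[s.indicator (fun _ => (1 : ℝ)) | m] ω ∂μ := (integral_condExp hm).symm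
    _ ≤ ∫ _, c ∂μ := integral_mono_ae integrable_condExp (integrable_const c) h
    _ = μ.real Set.univ * c := by rw [integral_const, smul_eq_mul]

theorem measure_le_ofReal_of_condExp_indicator_le [IsProbabilityMeasure μ] (hm : m ≤ m₀)
    (hs : MeasurableSet[m₀] s) (h : μ[s.indicator (fun _ => (1 : ℝ)) | m] ≤ᵐ[μ] fun _ => c) :
    μ s ≤ ENNReal.ofReal c := by
  rw [← ofReal_measureReal]
  refine ENNReal.ofReal_le_ofReal ?_
  simpa using measureReal_le_of_condExp_indicator_le hm hs h

end

theorem cross_screening_fwer_general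
    {Ω : Type*} {F : MeasurableSpace Ω} (P : Measure Ω) [IsProbabilityMeasure P]
    (G₁ G₂ : MeasurableSpace Ω) (hG₁ : G₁ ≤ F) (hG₂ : G₂ ≤ F)
    (E₁ E₂ : Set Ω) (hE₁ : MeasurableSet E₁) (hE₂ : MeasurableSet E₂)
    (α : ℝ) (hα0 : 0 ≤ α)
    (h₂ : P[E₂.indicator (fun _ => (1 : ℝ)) | G₁] ≤ᵐ[P] fun _ => α / 2)
    (h₁ : P[E₁.indicator (fun _ => (1 : ℝ)) | G₂] ≤ᵐ[P] fun _ => α / 2) :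
    P (E₁ ∪ E₂) ≤ ENNReal.ofReal α :=
  -- `hE₁` and `hE₂` elaborate against `G₂`, the last `MeasurableSpace` instance in scope.
  calc P (E₁ ∪ E₂) ≤ P E₁ + P E₂ := measure_union_le _ _
    _ ≤ ENNReal.ofReal (α / 2) + ENNReal.ofReal (α / 2) :=
        add_le_add (measure_le_ofReal_of_condExp_indicator_le hG₂ (hG₂ _ hE₁) h₁)
          (measure_le_ofReal_of_condExp_indicator_le hG₁ (hG₂ _ hE₂) h₂)
    _ = ENNReal.ofReal α := by
        rw [← ENNReal.ofReal_add (by linarith) (by linarith), add_halves]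

/-- Proposition 1 (cross-screening strongly controls the family-wise error rate):
if the conditional probability of `E₂` given the sub-σ-algebra `G₁` is at most `α/2`
a.e., and the conditional probability of `E₁` given `G₂` is at most `α/2` a.e., then
`P(E₁ ∪ E₂) ≤ α`. -/
theorem cross_screening_fwer
    {Ω : Type*} {F : MeasurableSpace Ω} (P : Measure Ω) [IsProbabilityMeasure P]
    (G₁ G₂ : MeasurableSpace Ω) (hG₁ : G₁ ≤ F) (hG₂ : G₂ ≤ F)
    (E₁ E₂ : Set Ω) (hE₁ : MeasurableSet E₁) (hE₂ : MeasurableSet E₂)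
    (α : ℝ) (hα0 : 0 ≤ α) (hα1 : α ≤ 1)
    (h₂ : P[E₂.indicator (fun _ => (1 : ℝ)) | G₁] ≤ᵐ[P] fun _ => α / 2)
    (h₁ : P[E₁.indicator (fun _ => (1 : ℝ)) | G₂] ≤ᵐ[P] fun _ => α / 2) :
    P (E₁ ∪ E₂) ≤ ENNReal.ofReal α :=
  cross_screening_fwer_general P G₁ G₂ hG₁ hG₂ E₁ E₂ hE₁ hE₂ α hα0 h₂ h₁
end

section
/- Let μ, μ' ∈ ℝ, σ > 0, σ' > 0, and let X be a random variable with distribution N(μ', σ'²). Then E[1 − Φ((X − μ)/σ)] = Φ((μ − μ')/√(σ² + σ'²)). (This is the exact normal version of the paper's expected P-value formula, equation (8), due to Sackrowitz and Samuel-Cahn: with μ = κ Σ_i q_i, σ² = κ(1−κ) Σ_i q_i², μ' = κ' Σ_i q_i, σ'² = κ'(1−κ') Σ_i q_i², EPV = Φ[(κ − κ') Σ_i q_i / √{(κ(1−κ) + κ'(1−κ')) Σ_i q_i²}].) -/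
/-!
By the symmetry `1 - Φ(t) = Φ(-t)` the integrand is `Φ((μ - x)/σ)` at `x = X ω`, the probability
that `x + σZ ≤ μ` for `Z ~ N(0, 1)`. Averaging over `x ~ N(μ', σ'²)` gives the mass of `Iic μ`
under the convolution `N(μ', σ'²) ∗ N(0, σ²) = N(μ', σ² + σ'²)`, which is
`Φ((μ - μ')/√(σ² + σ'²))`.
-/

open MeasureTheory ProbabilityTheory

/-- The standard normal cumulative distribution function Φ. -/
noncomputable def stdGaussianCDF (t : ℝ) : ℝ :=
  (gaussianReal 0 1 (Set.Iic t)).toReal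

open Set

lemma stdGaussianCDF_eq_cdf : stdGaussianCDF = cdf (gaussianReal 0 1) := by
  ext t
  rw [cdf_eq_real, measureReal_def, stdGaussianCDF]

lemma stdGaussianCDF_nonneg (t : ℝ) : 0 ≤ stdGaussianCDF t := ENNReal.toReal_nonneg

lemma measurable_stdGaussianCDF : Measurable stdGaussianCDF := by
  rw [stdGaussianCDF_eq_cdf]
  exact (cdf _).mono.measurable

lemma stdGaussianCDF_neg (t : ℝ) : stdGaussianCDF (-t) = 1 - stdGaussianCDF t := by
  have := nullSingletonClass_gaussianReal (μ := 0) (v := 1) one_ne_zero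
  have hsymm : gaussianReal 0 1 (Iic (-t)) = gaussianReal 0 1 (Ici t) := by
    conv_lhs => rw [← neg_zero, ← gaussianReal_map_neg]
    rw [Measure.map_apply measurable_neg measurableSet_Iic, neg_preimage, neg_Iic, neg_neg]
  rw [stdGaussianCDF, stdGaussianCDF, hsymm, ← compl_Iio,
    prob_compl_eq_one_sub measurableSet_Iio, measure_congr Iio_ae_eq_Iic,
    ENNReal.toReal_sub_of_le prob_le_one ENNReal.one_ne_top, ENNReal.toReal_one]

lemma gaussianReal_Iic (m : ℝ) {σ : ℝ} (hσ : 0 < σ) (t : ℝ) :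
    gaussianReal m (σ ^ 2).toNNReal (Iic t) = ENNReal.ofReal (stdGaussianCDF ((t - m) / σ)) := by
  have hmap : (gaussianReal 0 1).map (fun z ↦ m + σ * z) = gaussianReal m (σ ^ 2).toNNReal := by
    rw [show (fun z ↦ m + σ * z) = (m + ·) ∘ (σ * ·) from rfl,
      ← Measure.map_map (by fun_prop) (by fun_prop), gaussianReal_map_const_mul,
      gaussianReal_map_const_add]
    congr 1
    · ring
    · ext; simp [sq_nonneg]
  have hpre : (fun z ↦ m + σ * z) ⁻¹' Iic t = Iic ((t - m) / σ) := by
    ext z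
    simp only [mem_preimage, mem_Iic, le_div_iff₀ hσ]
    constructor <;> intro h <;> linarith
  rw [← hmap, Measure.map_apply (by fun_prop) measurableSet_Iic, hpre, stdGaussianCDF,
    ENNReal.ofReal_toReal (measure_ne_top _ _)]

lemma MeasureTheory.Measure.conv_apply {M : Type*} [AddMonoid M] [MeasurableSpace M]
    [MeasurableAdd₂ M] (ν ρ : Measure M) [SFinite ρ] {s : Set M} (hs : MeasurableSet s) :
    (ν ∗ ρ) s = ∫⁻ x, ρ ((x + ·) ⁻¹' s) ∂ν := by
  rw [Measure.conv, Measure.map_apply measurable_add hs, Measure.prod_apply (measurable_add hs)]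
  rfl

lemma lintegral_gaussianReal_Iic (m t : ℝ) (v v' : NNReal) :
    ∫⁻ x, gaussianReal x v (Iic t) ∂gaussianReal m v' = gaussianReal m (v' + v) (Iic t) := by
  rw [← add_zero m, ← gaussianReal_conv_gaussianReal, Measure.conv_apply _ _ measurableSet_Iic,
    add_zero]
  refine lintegral_congr fun x ↦ ?_
  rw [← Measure.map_apply (by fun_prop) measurableSet_Iic, gaussianReal_map_const_add, zero_add]

theorem expected_pvalue_normal_general
    {Ω : Type*} [MeasurableSpace Ω] (P : Measure Ω)
    (μ μ' σ σ' : ℝ) (hσ : 0 < σ)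
    (X : Ω → ℝ) (hX : Measurable X)
    (hXd : P.map X = gaussianReal μ' (Real.toNNReal (σ' ^ 2))) :
    ∫ ω, (1 - stdGaussianCDF ((X ω - μ) / σ)) ∂P =
      stdGaussianCDF ((μ - μ') / Real.sqrt (σ ^ 2 + σ' ^ 2)) := by
  have hs : 0 < Real.sqrt (σ ^ 2 + σ' ^ 2) := by positivity
  have hvar :
      (Real.sqrt (σ ^ 2 + σ' ^ 2) ^ 2).toNNReal = (σ' ^ 2).toNNReal + (σ ^ 2).toNNReal := by
    rw [Real.sq_sqrt (by positivity), add_comm, Real.toNNReal_add (sq_nonneg _) (sq_nonneg _)]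
  have hflip (x : ℝ) : 1 - stdGaussianCDF ((x - μ) / σ) = stdGaussianCDF ((μ - x) / σ) := by
    rw [← stdGaussianCDF_neg, ← neg_div, neg_sub]
  have hmeas : Measurable fun x ↦ stdGaussianCDF ((μ - x) / σ) :=
    measurable_stdGaussianCDF.comp (by fun_prop)
  calc ∫ ω, (1 - stdGaussianCDF ((X ω - μ) / σ)) ∂P
      = ∫ x, stdGaussianCDF ((μ - x) / σ) ∂gaussianReal μ' (σ' ^ 2).toNNReal := by
        simp_rw [hflip, ← hXd]
        exact (integral_map hX.aemeasurable hmeas.aestronglyMeasurable).symm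
    _ = (∫⁻ x, gaussianReal x (σ ^ 2).toNNReal (Iic μ)
          ∂gaussianReal μ' (σ' ^ 2).toNNReal).toReal := by
        rw [integral_eq_lintegral_of_nonneg_ae (.of_forall fun _ ↦ stdGaussianCDF_nonneg _)
          hmeas.aestronglyMeasurable]
        simp_rw [gaussianReal_Iic _ hσ]
    _ = _ := by
        rw [lintegral_gaussianReal_Iic, ← hvar, gaussianReal_Iic _ hs,
          ENNReal.toReal_ofReal (stdGaussianCDF_nonneg _)]

/-- Exact normal version of the expected P-value formula (equation (8), Sackrowitz
and Samuel-Cahn): if `X ~ N(μ', σ'²)`, then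
`E[1 - Φ((X - μ)/σ)] = Φ((μ - μ')/√(σ² + σ'²))`. -/
theorem expected_pvalue_normal
    {Ω : Type*} [MeasurableSpace Ω] (P : Measure Ω) [IsProbabilityMeasure P]
    (μ μ' σ σ' : ℝ) (hσ : 0 < σ) (hσ' : 0 < σ')
    (X : Ω → ℝ) (hX : Measurable X)
    (hXd : P.map X = gaussianReal μ' (Real.toNNReal (σ' ^ 2))) :
    ∫ ω, (1 - stdGaussianCDF ((X ω - μ) / σ)) ∂P =
      stdGaussianCDF ((μ - μ') / Real.sqrt (σ ^ 2 + σ' ^ 2)) :=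
  expected_pvalue_normal_general P μ μ' σ σ' hσ X hX hXd
end
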